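/- arXiv:cond-mat/0505698 — 2 statements merged into one kernel-verified Lean document; each statement's English description precedes it below -/
import Mathlib

section
/- For N = 2 (Ising case), the operators A_0 = -2N^{-1}H_0 and A_1 = -2N^{-1}H_1 on (C^2)^{⊗L} satisfy the Dolan–Grady relations: [A_1,[A_1,[A_1,A_0]]] = 16[A_1,A_0] and [A_0,[A_0,[A_0,A_1]]] = 16[A_0,A_1]. -/
open Matrix Complex Finset

noncomputable section

/-- Pauli σ^x at site ℓ of (ℂ²)^{⊗L}. -/
def Xs2 (L : ℕ) (ℓ : Fin L) : Matrix (Fin L → ZMod 2) (Fin L → ZMod 2) ℂ :=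
  Matrix.of fun f g => if f ℓ = g ℓ + 1 ∧ ∀ j, j ≠ ℓ → f j = g j then 1 else 0

/-- Pauli σ^z at site ℓ of (ℂ²)^{⊗L}. -/
def Zs2 (L : ℕ) (ℓ : Fin L) : Matrix (Fin L → ZMod 2) (Fin L → ZMod 2) ℂ :=
  Matrix.diagonal fun f => (-1 : ℂ) ^ (f ℓ).val

/-- A_0 = -H_0 = ∑_ℓ σ^x_ℓ for the Ising chain. -/
def A0 (L : ℕ) : Matrix (Fin L → ZMod 2) (Fin L → ZMod 2) ℂ :=
  - (- ∑ ℓ : Fin L, Xs2 L ℓ)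

/-- A_1 = -H_1 = ∑_ℓ σ^z_ℓ σ^z_{ℓ+1} for the Ising chain (periodic). -/
def A1 (L : ℕ) [NeZero L] : Matrix (Fin L → ZMod 2) (Fin L → ZMod 2) ℂ :=
  - (- ∑ ℓ : Fin L, Zs2 L ℓ * Zs2 L (ℓ + 1))

/-! ### General Dolan–Grady-type lemma -/

section General
set_option linter.unusedSectionVars false
variable {R : Type*} [Ring R] {ι : Type*} [Fintype ι] [DecidableEq ι]

lemma sum_lie' (f : ι → R) (x : R) : ⁅∑ i, f i, x⁆ = ∑ i, ⁅f i, x⁆ := by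
  simp [Ring.lie_def, Finset.sum_mul, Finset.mul_sum, Finset.sum_sub_distrib]

lemma lie_sum' (f : ι → R) (x : R) : ⁅x, ∑ i, f i⁆ = ∑ i, ⁅x, f i⁆ := by
  simp [Ring.lie_def, Finset.sum_mul, Finset.mul_sum, Finset.sum_sub_distrib]

lemma lie_nsmul' (n : ℕ) (x m : R) : ⁅x, n • m⁆ = n • ⁅x, m⁆ := by
  rw [Ring.lie_def, Ring.lie_def, mul_smul_comm, smul_mul_assoc, smul_sub]

lemma lie_comm_mul (A x m : R) (hx : A * x = x * A) : ⁅A, x * m⁆ = x * ⁅A, m⁆ := by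
  simp only [Ring.lie_def, mul_sub]
  rw [← mul_assoc, hx, mul_assoc, mul_assoc]

lemma dg_single (a : ι → R) (hcomm : ∀ i i', a i * a i' = a i' * a i)
    (hsq : ∀ i, a i * a i = 1)
    (w : R) (p q : ι) (hpq : p ≠ q)
    (hp : a p * w = -(w * a p)) (hq : a q * w = -(w * a q))
    (hrest : ∀ i, i ≠ p → i ≠ q → a i * w = w * a i) :
    ⁅∑ i, a i, ⁅∑ i, a i, ⁅∑ i, a i, w⁆⁆⁆ = (16 : ℕ) • ⁅∑ i, a i, w⁆ := by
  set A := ∑ i, a i with hA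
  set s := a p + a q with hs
  have hAs : A * s = s * A := by
    rw [hA, Finset.sum_mul, Finset.mul_sum]
    exact Finset.sum_congr rfl fun i _ => by
      simp only [hs, mul_add, add_mul, hcomm]
  have h1 : ⁅A, w⁆ = (2 : ℕ) • (s * w) := by
    rw [hA, sum_lie']
    rw [← Finset.sum_subset (Finset.subset_univ ({p, q} : Finset ι))
      (fun k _ hk => by
        simp only [Finset.mem_insert, Finset.mem_singleton, not_or] at hk
        rw [Ring.lie_def, hrest k hk.1 hk.2, sub_self]),
      Finset.sum_pair hpq]
    rw [Ring.lie_def, Ring.lie_def, hs, add_mul, smul_add, two_smul, two_smul]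
    have hp' : w * a p = -(a p * w) := by rw [hp, neg_neg]
    have hq' : w * a q = -(a q * w) := by rw [hq, neg_neg]
    rw [hp', hq', sub_neg_eq_add, sub_neg_eq_add]
  have hcube : s * (s * s) = (4 : ℕ) • s := by
    have huv : a q * a p = a p * a q := hcomm _ _
    have hss : s * s = (2:ℕ) • (1:R) + (2:ℕ) • (a p * a q) := by
      rw [hs, add_mul, mul_add, mul_add, hsq, hsq, huv]; abel
    have hspq : s * (a p * a q) = a q + a p := by
      rw [hs, add_mul, ← mul_assoc, hsq, one_mul, ← mul_assoc, huv, mul_assoc, hsq, mul_one]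
    rw [hss, mul_add, mul_smul_comm, mul_smul_comm, mul_one, hspq, hs]
    abel
  have h2 : ⁅A, ⁅A, w⁆⁆ = (4 : ℕ) • (s * (s * w)) := by
    rw [h1, lie_nsmul', lie_comm_mul A s w hAs, h1, mul_smul_comm, smul_smul]
    norm_num
  rw [h2, lie_nsmul', lie_comm_mul A s _ hAs, lie_comm_mul A s w hAs, h1]
  simp only [mul_smul_comm, smul_smul]
  rw [show s * (s * (s * w)) = (s * (s * s)) * w by rw [mul_assoc, mul_assoc], hcube,
    smul_mul_assoc, smul_smul]
  norm_num
end General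

/-! ### Basic facts about the Pauli operators -/

section Pauli
variable {L : ℕ}

/-- Spin-flip at site `ℓ`. -/
def flp (L : ℕ) (ℓ : Fin L) (g : Fin L → ZMod 2) : Fin L → ZMod 2 :=
  Function.update g ℓ (g ℓ + 1)

lemma zmod2_aa (x : ZMod 2) : x + 1 + 1 = x := by
  rw [add_assoc, show (1 + 1 : ZMod 2) = 0 by decide, add_zero]

lemma negpow (x : ZMod 2) : ((-1:ℂ)) ^ ((x+1).val) = -((-1:ℂ)) ^ x.val := by
  rcases (show x = 0 ∨ x = 1 by revert x; decide) with h | h <;> subst h <;>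
    simp [show ((0:ZMod 2)+1).val = 1 from by decide,
      show ((1:ZMod 2)+1).val = 0 from by decide,
      show ((0:ZMod 2)).val = 0 from rfl, show ((1:ZMod 2)).val = 1 from rfl]

lemma flp_apply_ne (ℓ m : Fin L) (g : Fin L → ZMod 2) (h : m ≠ ℓ) : flp L ℓ g m = g m :=
  Function.update_of_ne h _ _

lemma flp_apply_self (ℓ : Fin L) (g : Fin L → ZMod 2) : flp L ℓ g ℓ = g ℓ + 1 :=
  Function.update_self _ _ _

lemma flp_flp_self (ℓ : Fin L) (g : Fin L → ZMod 2) : flp L ℓ (flp L ℓ g) = g := by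
  funext j
  by_cases hj : j = ℓ
  · subst hj
    rw [flp_apply_self, flp_apply_self, zmod2_aa]
  · rw [flp_apply_ne _ _ _ hj, flp_apply_ne _ _ _ hj]

lemma flp_comm (ℓ m : Fin L) (g : Fin L → ZMod 2) :
    flp L ℓ (flp L m g) = flp L m (flp L ℓ g) := by
  by_cases hlm : ℓ = m
  · subst hlm; rfl
  funext j
  by_cases hj1 : j = ℓ
  · subst hj1
    rw [flp_apply_self, flp_apply_ne _ _ _ hlm, flp_apply_ne _ _ _ (Ne.symm (Ne.symm hlm)),
      flp_apply_self]
  · by_cases hj2 : j = m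
    · subst hj2
      rw [flp_apply_ne _ _ _ hj1, flp_apply_self, flp_apply_self,
        flp_apply_ne _ _ _ (fun h => hlm h.symm)]
    · rw [flp_apply_ne _ _ _ hj1, flp_apply_ne _ _ _ hj2, flp_apply_ne _ _ _ hj2,
        flp_apply_ne _ _ _ hj1]

lemma Xs2_eq (ℓ : Fin L) :
    Xs2 L ℓ = Matrix.of fun f g => if f = flp L ℓ g then (1:ℂ) else 0 := by
  ext f g
  simp only [Xs2, Matrix.of_apply]
  refine if_congr ?_ rfl rfl
  constructor
  · rintro ⟨h1, h2⟩
    funext j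
    by_cases hj : j = ℓ
    · subst hj; rw [flp_apply_self]; exact h1
    · rw [flp_apply_ne _ _ _ hj]; exact h2 j hj
  · intro h; subst h
    exact ⟨flp_apply_self _ _, fun j hj => flp_apply_ne _ _ _ hj⟩

lemma of_ind_mul (σ τ : (Fin L → ZMod 2) → (Fin L → ZMod 2)) :
    ((Matrix.of fun f g => if f = σ g then (1:ℂ) else 0) *
      (Matrix.of fun f g => if f = τ g then (1:ℂ) else 0)) =
    Matrix.of fun f g => if f = σ (τ g) then (1:ℂ) else 0 := by
  ext f g
  rw [Matrix.mul_apply, Matrix.of_apply]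
  rw [Finset.sum_eq_single (τ g)]
  · simp
  · intro h _ hh
    simp [Matrix.of_apply, if_neg hh]
  · simp

lemma X_mul_X (ℓ m : Fin L) : Xs2 L ℓ * Xs2 L m = Xs2 L m * Xs2 L ℓ := by
  rw [Xs2_eq, Xs2_eq, of_ind_mul, of_ind_mul]
  ext f g
  rw [Matrix.of_apply, Matrix.of_apply, flp_comm]

lemma X_sq (ℓ : Fin L) : Xs2 L ℓ * Xs2 L ℓ = 1 := by
  rw [Xs2_eq, of_ind_mul]
  ext f g
  rw [Matrix.of_apply, flp_flp_self, Matrix.one_apply]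

lemma XZ_comm (i m : Fin L) (h : i ≠ m) : Xs2 L i * Zs2 L m = Zs2 L m * Xs2 L i := by
  rw [Xs2_eq]
  ext f g
  rw [Zs2, Matrix.mul_diagonal, Matrix.diagonal_mul, Matrix.of_apply]
  by_cases hfg : f = flp L i g
  · rw [if_pos hfg, hfg, one_mul, mul_one, flp_apply_ne _ _ _ (fun hmi => h hmi.symm)]
  · rw [if_neg hfg, zero_mul, mul_zero]

lemma XZ_anti (ℓ : Fin L) : Xs2 L ℓ * Zs2 L ℓ = -(Zs2 L ℓ * Xs2 L ℓ) := by
  rw [Xs2_eq]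
  ext f g
  rw [Zs2, Matrix.mul_diagonal, Matrix.neg_apply, Matrix.diagonal_mul, Matrix.of_apply]
  by_cases hfg : f = flp L ℓ g
  · rw [if_pos hfg, hfg, one_mul, mul_one, flp_apply_self, negpow, neg_neg]
  · rw [if_neg hfg, zero_mul, mul_zero, neg_zero]

lemma XB_comm (i m : Fin L) [NeZero L] (h1 : i ≠ m) (h2 : i ≠ m + 1) :
    Xs2 L i * (Zs2 L m * Zs2 L (m+1)) = (Zs2 L m * Zs2 L (m+1)) * Xs2 L i := by
  rw [← mul_assoc, XZ_comm _ _ h1, mul_assoc, XZ_comm _ _ h2, ← mul_assoc]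

lemma XB_anti_left (m : Fin L) [NeZero L] (h : m ≠ m + 1) :
    Xs2 L m * (Zs2 L m * Zs2 L (m+1)) = -((Zs2 L m * Zs2 L (m+1)) * Xs2 L m) := by
  rw [← mul_assoc, XZ_anti, neg_mul, mul_assoc, XZ_comm _ _ h, ← mul_assoc]

lemma XB_anti_right (m : Fin L) [NeZero L] (h : m + 1 ≠ m) :
    Xs2 L (m+1) * (Zs2 L m * Zs2 L (m+1)) = -((Zs2 L m * Zs2 L (m+1)) * Xs2 L (m+1)) := by
  rw [← mul_assoc, XZ_comm _ _ h, mul_assoc, XZ_anti, mul_neg, ← mul_assoc]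

lemma B_comm (m m' : Fin L) [NeZero L] :
    (Zs2 L m * Zs2 L (m+1)) * (Zs2 L m' * Zs2 L (m'+1)) =
    (Zs2 L m' * Zs2 L (m'+1)) * (Zs2 L m * Zs2 L (m+1)) := by
  simp only [Zs2, Matrix.diagonal_mul_diagonal]
  exact congrArg Matrix.diagonal (funext fun f => by ring)

lemma B_sq (m : Fin L) [NeZero L] :
    (Zs2 L m * Zs2 L (m+1)) * (Zs2 L m * Zs2 L (m+1)) = 1 := by
  simp only [Zs2, Matrix.diagonal_mul_diagonal]
  rw [← Matrix.diagonal_one]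
  exact congrArg Matrix.diagonal (funext fun f => by
    rw [mul_mul_mul_comm, ← pow_add, ← pow_add,
      Even.neg_one_pow ⟨(f m).val, rfl⟩, Even.neg_one_pow ⟨(f (m+1)).val, rfl⟩, one_mul])

end Pauli

/-- Dolan–Grady relations for the Ising (N = 2) chain. -/
theorem dolan_grady_ising (L : ℕ) [NeZero L] (hL : 2 ≤ L) :
    ⁅A1 L, ⁅A1 L, ⁅A1 L, A0 L⁆⁆⁆ = (16 : ℂ) • ⁅A1 L, A0 L⁆ ∧
    ⁅A0 L, ⁅A0 L, ⁅A0 L, A1 L⁆⁆⁆ = (16 : ℂ) • ⁅A0 L, A1 L⁆ := by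
  have hone : (1 : Fin L) ≠ 0 := by
    intro h
    have := congrArg Fin.val h
    rw [Fin.val_one', Nat.mod_eq_of_lt hL] at this
    exact one_ne_zero this
  have hsucc : ∀ j : Fin L, j ≠ j + 1 := by
    intro j h
    rw [left_eq_add] at h
    exact hone h
  have hA0 : A0 L = ∑ ℓ : Fin L, Xs2 L ℓ := by rw [A0, neg_neg]
  have hA1 : A1 L = ∑ ℓ : Fin L, Zs2 L ℓ * Zs2 L (ℓ + 1) := by rw [A1, neg_neg]
  have hcast : ∀ M : Matrix (Fin L → ZMod 2) (Fin L → ZMod 2) ℂ, (16:ℕ) • M = (16:ℂ) • M := by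
    intro M
    rw [show ((16:ℂ)) = ((16:ℕ):ℂ) by norm_num, Nat.cast_smul_eq_nsmul]
  constructor
  · -- a = bonds, b = X
    rw [hA0, hA1, lie_sum', lie_sum', lie_sum', Finset.smul_sum]
    refine Finset.sum_congr rfl fun j _ => ?_
    rw [← hcast]
    have hj1 : j - 1 + 1 = j := sub_add_cancel j 1
    have hpq : j - 1 ≠ j := by
      intro h
      exact hsucc (j - 1) (h.trans hj1.symm)
    have hp : (Zs2 L (j-1) * Zs2 L ((j-1)+1)) * Xs2 L j = -(Xs2 L j * (Zs2 L (j-1) * Zs2 L ((j-1)+1))) := by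
      have hne : (j - 1) + 1 ≠ j - 1 := by rw [hj1]; exact fun h => hpq h.symm
      have h := XB_anti_right (j - 1) hne
      rw [hj1] at h
      rw [hj1, h, neg_neg]
    have hq : (Zs2 L j * Zs2 L (j+1)) * Xs2 L j = -(Xs2 L j * (Zs2 L j * Zs2 L (j+1))) := by
      have h := XB_anti_left j (hsucc j)
      rw [h, neg_neg]
    have hr : ∀ m : Fin L, m ≠ j - 1 → m ≠ j →
        (Zs2 L m * Zs2 L (m+1)) * Xs2 L j = Xs2 L j * (Zs2 L m * Zs2 L (m+1)) := by
      intro m hm1 hm2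
      refine (XB_comm j m (fun h => hm2 h.symm) fun h => ?_).symm
      exact hm1 (by rw [h, add_sub_cancel_right])
    exact dg_single (fun m => Zs2 L m * Zs2 L (m+1)) (fun m m' => B_comm m m')
      (fun m => B_sq m) (Xs2 L j) (j - 1) j hpq hp hq hr
  · -- a = X, b = bonds
    rw [hA0, hA1, lie_sum', lie_sum', lie_sum', Finset.smul_sum]
    refine Finset.sum_congr rfl fun j _ => ?_
    rw [← hcast]
    exact dg_single (fun i => Xs2 L i) (fun i i' => X_mul_X i i') (fun i => X_sq i)
      (Zs2 L j * Zs2 L (j+1)) j (j+1) (hsucc j)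
      (XB_anti_left j (hsucc j)) (XB_anti_right j fun h => hsucc j h.symm)
      (fun i hi1 hi2 => XB_comm i j hi1 hi2)

end
end

section
/- Let a_1, ..., a_n be distinct nonzero complex numbers, and in the direct sum of n copies of sl_2 define A_m = 2∑_{j=1}^n (a_j^m e_j^+ + a_j^{-m} e_j^-) and G_m = ∑_{j=1}^n (a_j^m - a_j^{-m}) h_j. Let ∑_{k=0}^{2n} α_k z^k = ∏_{j=1}^n (z - a_j)(z - a_j^{-1}). Then for every ℓ ∈ Z, ∑_{k=0}^{2n} α_k A_{k+ℓ} = 0. -/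
open Matrix Polynomial Finset

noncomputable section

/-- e⁺_j in the j-th copy of sl₂, realized as a 2×2 complex matrix. -/
def E01 : Matrix (Fin 2) (Fin 2) ℂ := !![0, 1; 0, 0]

/-- e⁻_j in the j-th copy of sl₂, realized as a 2×2 complex matrix. -/
def E10 : Matrix (Fin 2) (Fin 2) ℂ := !![0, 0; 1, 0]

/-- A_m = 2 ∑_j (a_j^m e⁺_j + a_j^{-m} e⁻_j) as an element of ⊕_{j=1}^n sl₂,
realized in the product of n copies of 2×2 matrices. -/
def Aev (n : ℕ) (a : Fin n → ℂ) (m : ℤ) : Fin n → Matrix (Fin 2) (Fin 2) ℂ :=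
  fun j => (2 * a j ^ m) • E01 + (2 * a j ^ (-m)) • E10

/-- Finite recurrence: ∑_{k=0}^{2n} α_k A_{k+ℓ} = 0 where
∑_k α_k z^k = ∏_j (z - a_j)(z - a_j⁻¹). -/
theorem finite_recurrence (n : ℕ) (a : Fin n → ℂ) (ha : ∀ j, a j ≠ 0)
    (hinj : Function.Injective a) (ℓ : ℤ) :
    ∑ k ∈ Finset.range (2 * n + 1),
        (∏ j, (Polynomial.X - Polynomial.C (a j)) * (Polynomial.X - Polynomial.C (a j)⁻¹)).coeff k
          • Aev n a ((k : ℤ) + ℓ) = 0 := by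
  set P : Polynomial ℂ := ∏ j, (X - C (a j)) * (X - C (a j)⁻¹) with hP
  have hdeg : P.natDegree < 2 * n + 1 := by
    have h1 : P.natDegree ≤ ∑ _j : Fin n, 2 := by
      refine le_trans (natDegree_prod_le _ _) (Finset.sum_le_sum fun j _ => ?_)
      refine le_trans (natDegree_mul_le) ?_
      simp [natDegree_X_sub_C]
    simp only [Finset.sum_const, Finset.card_univ, Fintype.card_fin, smul_eq_mul] at h1
    omega
  have heval : ∀ x : ℂ, ∑ k ∈ Finset.range (2 * n + 1), P.coeff k * x ^ k = P.eval x := by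
    intro x
    rw [Polynomial.eval_eq_sum_range' hdeg]
  have hP1 : ∀ j, P.eval (a j) = 0 := by
    intro j
    rw [hP, Polynomial.eval_prod]
    exact Finset.prod_eq_zero (Finset.mem_univ j) (by simp)
  have hP2 : ∀ j, P.eval (a j)⁻¹ = 0 := by
    intro j
    rw [hP, Polynomial.eval_prod]
    exact Finset.prod_eq_zero (Finset.mem_univ j) (by simp)
  funext j
  have haj := ha j
  simp only [Finset.sum_apply, Pi.zero_apply, Pi.smul_apply, Aev, smul_add, smul_smul]
  rw [Finset.sum_add_distrib, ← Finset.sum_smul, ← Finset.sum_smul]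
  have e1 : ∑ k ∈ Finset.range (2 * n + 1), P.coeff k * (2 * a j ^ ((k : ℤ) + ℓ)) = 0 := by
    have : ∀ k : ℕ, P.coeff k * (2 * a j ^ ((k : ℤ) + ℓ)) =
        (2 * a j ^ ℓ) * (P.coeff k * (a j) ^ k) := by
      intro k
      rw [zpow_add₀ haj, zpow_natCast]
      ring
    simp only [this, ← Finset.mul_sum, heval, hP1, mul_zero]
  have e2 : ∑ k ∈ Finset.range (2 * n + 1), P.coeff k * (2 * a j ^ (-((k : ℤ) + ℓ))) = 0 := by
    have : ∀ k : ℕ, P.coeff k * (2 * a j ^ (-((k : ℤ) + ℓ))) =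
        (2 * a j ^ (-ℓ)) * (P.coeff k * ((a j)⁻¹) ^ k) := by
      intro k
      rw [neg_add, zpow_add₀ haj, _root_.zpow_neg, zpow_natCast, ← inv_pow]
      ring
    simp only [this, ← Finset.mul_sum, heval, hP2, mul_zero]
  rw [e1, e2]
  simp

end
end
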